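/- Let Q ∈ ℤ[x_1,…,x_n] be an integral polynomial, λ ∈ ℤ, and j ≥ 1 an integer. Set I_j = [2^{j−1}, 2^j) ∩ ℤ and C_j(d) = ∑_{h ≥ 1} μ(h)·1_{dh ∈ I_j} (a finite sum, with C_j(d) = 0 whenever d ≥ 2^j). Then for every function Φ : ℝ^n → ℂ and every ξ ∈ ℝ^n, ∑_{q ∈ I_j} ∑_{a ∈ U_q} ∑_{𝐚 ∈ Z_q^n} F_q(a,𝐚) e(−λa/q) Φ(ξ − 𝐚/q) = ∑_{d = 1}^{∞} C_j(d) ∑_{a ∈ Z_d} ∑_{𝐚 ∈ Z_d^n} F_d(a,𝐚) e(−λa/d) Φ(ξ − 𝐚/d), where both sides are finite sums. -/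

import Mathlib

/-!
Scaling the modulus and the numerators by a common factor `m` does not change a term:
`F_{mq}(ma, 𝐜)` vanishes unless `m ∣ 𝐜` (the sum over the digits `s div q` is a complete
character sum), and otherwise equals `F_q(a, 𝐜/m)`, because `Q(s) mod q` depends only on
`s mod q`. Grouping the `a ∈ Z_d` according to the reduced denominator `d / gcd(a, d)` therefore
writes the full sum `T(d)` over `a ∈ Z_d` as `∑_{q ∣ d} S(q)`, with `S(q)` the sum over `a ∈ U_q`.
Möbius inversion gives `S(q) = ∑_{hd = q} μ(h) T(d)`, and summing over `q ∈ I_j` collects the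
coefficients `C_j(d)`.
-/

open scoped BigOperators

noncomputable section

/-- `e(t) = e^{2πit}`. -/
def e2pi (t : ℝ) : ℂ := Complex.exp (2 * Real.pi * Complex.I * t)

/-- The normalized Weyl sum `F_d(a, 𝐚) = d^{-n} ∑_{s ∈ Z_d^n} e((a·Q(s) + s·𝐚)/d)`. -/
def weylF (n : ℕ) (Q : MvPolynomial (Fin n) ℤ) (d : ℕ) (a : ℤ) (av : Fin n → ℤ) : ℂ :=
  ((d : ℂ) ^ n)⁻¹ *
    ∑ s : Fin n → Fin d,
      e2pi (((a * MvPolynomial.eval (fun i => ((s i : ℕ) : ℤ)) Q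
        + ∑ i, ((s i : ℕ) : ℤ) * av i : ℤ) : ℝ) / (d : ℝ))

/-- `C_j(d) = ∑_{h ≥ 1} μ(h) 1_{dh ∈ I_j}`, a finite sum since `dh ∈ I_j = [2^{j-1}, 2^j)`
forces `h ≤ 2^j`. -/
def Cjd (j d : ℕ) : ℤ :=
  ∑ h ∈ Finset.Icc 1 (2 ^ j),
    if 2 ^ (j - 1) ≤ d * h ∧ d * h < 2 ^ j then ArithmeticFunction.moebius h else 0

open Finset

lemma e2pi_add (s t : ℝ) : e2pi (s + t) = e2pi s * e2pi t := by
  rw [e2pi, e2pi, e2pi, ← Complex.exp_add]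
  congr 1
  push_cast
  ring

lemma e2pi_sum {ι : Type*} (s : Finset ι) (f : ι → ℝ) :
    e2pi (∑ i ∈ s, f i) = ∏ i ∈ s, e2pi (f i) := by
  simp only [e2pi, ← Complex.exp_sum, Complex.ofReal_sum, Finset.mul_sum]

lemma e2pi_natCast_mul (k : ℕ) (t : ℝ) : e2pi (k * t) = e2pi t ^ k := by
  rw [e2pi, e2pi, ← Complex.exp_nat_mul]
  congr 1
  push_cast
  ring

lemma e2pi_eq_one_iff (t : ℝ) : e2pi t = 1 ↔ ∃ k : ℤ, t = k := by
  rw [e2pi, Complex.exp_eq_one_iff]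
  refine exists_congr fun k => ⟨fun h => ?_, fun h => by rw [h]; push_cast; ring⟩
  have h2pi : (2 * Real.pi * Complex.I : ℂ) ≠ 0 := by simp [Real.pi_ne_zero]
  exact_mod_cast mul_left_cancel₀ h2pi (h.trans (mul_comm _ _))

lemma e2pi_intCast (k : ℤ) : e2pi k = 1 :=
  (e2pi_eq_one_iff _).2 ⟨k, rfl⟩

lemma e2pi_add_intCast (t : ℝ) (k : ℤ) : e2pi (t + k) = e2pi t := by
  rw [e2pi_add, e2pi_intCast, mul_one]

lemma e2pi_intCast_div_of_modEq {q : ℕ} {x y : ℤ} (h : x ≡ y [ZMOD q]) :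
    e2pi (x / q) = e2pi (y / q) := by
  rcases eq_or_ne q 0 with rfl | hq
  · rw [Nat.cast_zero, Int.modEq_zero_iff.1 h]
  obtain ⟨k, hk⟩ := h.symm.dvd
  have : (x : ℝ) / q = y / q + k := by
    rw [← sub_eq_iff_eq_add', ← sub_div, div_eq_iff (by exact_mod_cast hq)]
    exact_mod_cast (by linarith : x - y = k * q)
  rw [this, e2pi_add_intCast]

lemma sum_fin_e2pi_mul_div (m : ℕ) (c : ℤ) :
    ∑ x : Fin m, e2pi ((x : ℕ) * c / m) = if (m : ℤ) ∣ c then (m : ℂ) else 0 := by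
  rcases eq_or_ne m 0 with rfl | hm
  · simp
  have hm' : (m : ℝ) ≠ 0 := by exact_mod_cast hm
  have hpow : ∀ x : Fin m, e2pi ((x : ℕ) * c / m) = e2pi (c / m) ^ (x : ℕ) := fun x => by
    rw [← e2pi_natCast_mul, mul_div_assoc]
  simp_rw [hpow, Fin.sum_univ_eq_sum_range (e2pi (c / m) ^ ·)]
  split_ifs with hdvd
  · obtain ⟨k, rfl⟩ := hdvd
    rw [Int.cast_mul, Int.cast_natCast, mul_div_cancel_left₀ _ hm', e2pi_intCast]
    simp
  · have hr : e2pi (c / m) ≠ 1 := by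
      rintro hr
      obtain ⟨k, hk⟩ := (e2pi_eq_one_iff _).1 hr
      rw [div_eq_iff hm'] at hk
      exact hdvd ⟨k, by rw [mul_comm]; exact_mod_cast hk⟩
    rw [geom_sum_eq hr, ← e2pi_natCast_mul, mul_div_cancel₀ _ hm', e2pi_intCast, sub_self,
      zero_div]

lemma MvPolynomial.eval_modEq {σ : Type*} (Q : MvPolynomial σ ℤ) {q : ℤ} {x y : σ → ℤ}
    (h : ∀ i, x i ≡ y i [ZMOD q]) : eval x Q ≡ eval y Q [ZMOD q] := by
  induction Q using MvPolynomial.induction_on with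
  | C a => simp
  | add p r hp hr => simpa only [map_add] using hp.add hr
  | mul_X p i hp => simpa only [map_mul, eval_X] using hp.mul (h i)

lemma sum_pi_fin_e2pi_dot_div (n m : ℕ) (c : Fin n → ℤ) :
    ∑ u : Fin n → Fin m, e2pi (((∑ i, ((u i : ℕ) : ℤ) * c i : ℤ) : ℝ) / m) =
      if ∀ i, (m : ℤ) ∣ c i then (m : ℂ) ^ n else 0 := by
  simp only [Int.cast_sum, Int.cast_mul, Int.cast_natCast, Finset.sum_div, e2pi_sum]
  rw [← Fintype.prod_sum fun i (x : Fin m) => e2pi ((x : ℕ) * c i / m)]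
  simp only [sum_fin_e2pi_mul_div, Fintype.prod_ite_zero, Finset.prod_const, Finset.card_univ,
    Fintype.card_fin]

lemma sum_pi_fin_mul {M : Type*} [AddCommMonoid M] (n m q : ℕ) (f : (Fin n → ℕ) → M) :
    ∑ s : Fin n → Fin (m * q), f (fun i => s i) =
      ∑ u : Fin n → Fin m, ∑ t : Fin n → Fin q, f (fun i => t i + q * u i) := by
  rw [← Fintype.sum_prod_type']
  exact (Fintype.sum_equiv ((Equiv.arrowProdEquivProdArrow _ _ _).symm.trans
    (Equiv.piCongrRight fun _ => finProdFinEquiv)) _ _ fun _ => rfl).symm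

lemma sum_pi_fin_mul_ite_dvd {M : Type*} [AddCommMonoid M] (n m q : ℕ) (hm : 0 < m)
    (g : (Fin n → ℕ) → M) :
    ∑ s : Fin n → Fin (m * q), (if ∀ i, m ∣ (s i : ℕ) then g (fun i => s i) else 0) =
      ∑ t : Fin n → Fin q, g (fun i => m * t i) := by
  rw [← Finset.sum_filter]
  symm
  refine Finset.sum_nbij' (fun t i => ⟨m * t i, Nat.mul_lt_mul_of_pos_left (t i).2 hm⟩)
    (fun s i => ⟨s i / m, Nat.div_lt_of_lt_mul (s i).2⟩) ?_ ?_ ?_ ?_ ?_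
  · intro t _
    simp
  · intro s _
    simp
  · intro t _
    funext i
    simp [hm.ne']
  · intro s hs
    simp only [Finset.mem_filter, Finset.mem_univ, true_and] at hs
    funext i
    simp [Nat.mul_div_cancel' (hs i)]
  · intro t _
    rfl


lemma e2pi_phase_digit_split {n : ℕ} (Q : MvPolynomial (Fin n) ℤ) {m q : ℕ} (hm : 0 < m)
    (hq : 0 < q) (a : ℤ) (c : Fin n → ℤ) (t u : Fin n → ℕ) :
    e2pi ((((m * a) * MvPolynomial.eval (fun i => ((t i + q * u i : ℕ) : ℤ)) Q +
        ∑ i, ((t i + q * u i : ℕ) : ℤ) * c i : ℤ) : ℝ) / ((m * q : ℕ) : ℝ)) =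
      e2pi (((a * MvPolynomial.eval (fun i => (t i : ℤ)) Q : ℤ) : ℝ) / q) *
        e2pi (((∑ i, (t i : ℤ) * c i : ℤ) : ℝ) / (m * q)) *
        e2pi (((∑ i, (u i : ℤ) * c i : ℤ) : ℝ) / m) := by
  have hQ : MvPolynomial.eval (fun i => ((t i + q * u i : ℕ) : ℤ)) Q ≡
      MvPolynomial.eval (fun i => (t i : ℤ)) Q [ZMOD q] :=
    MvPolynomial.eval_modEq Q fun i => by simp [Int.ModEq]
  rw [← e2pi_intCast_div_of_modEq (hQ.mul_left a), ← e2pi_add, ← e2pi_add]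
  have hdot : ∑ i, ((t i + q * u i : ℕ) : ℤ) * c i =
      ∑ i, (t i : ℤ) * c i + q * ∑ i, (u i : ℤ) * c i := by
    simp only [Nat.cast_add, Nat.cast_mul, add_mul, Finset.sum_add_distrib, Finset.mul_sum,
      mul_assoc]
  rw [hdot]
  generalize ∑ i, (t i : ℤ) * c i = x
  generalize ∑ i, (u i : ℤ) * c i = y
  have hm' : (m : ℝ) ≠ 0 := by exact_mod_cast hm.ne'
  have hq' : (q : ℝ) ≠ 0 := by exact_mod_cast hq.ne'
  congr 1
  push_cast
  field_simp
  ring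

lemma weylF_mul_mul (n : ℕ) (Q : MvPolynomial (Fin n) ℤ) {m q : ℕ} (hm : 0 < m) (hq : 0 < q)
    (a : ℤ) (c : Fin n → ℤ) :
    weylF n Q (m * q) (m * a) c =
      if ∀ i, (m : ℤ) ∣ c i then weylF n Q q a (fun i => c i / m) else 0 := by
  rw [weylF, sum_pi_fin_mul n m q fun s =>
    e2pi ((((m * a) * MvPolynomial.eval (fun i => (s i : ℤ)) Q + ∑ i, (s i : ℤ) * c i : ℤ) : ℝ) /
      ((m * q : ℕ) : ℝ))]
  simp_rw [e2pi_phase_digit_split Q hm hq, ← Finset.sum_mul, ← Finset.mul_sum,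
    sum_pi_fin_e2pi_dot_div]
  split_ifs with hdvd
  · have hphase : ∀ t : Fin n → Fin q,
        e2pi (((a * MvPolynomial.eval (fun i => ((t i : ℕ) : ℤ)) Q : ℤ) : ℝ) / q) *
          e2pi (((∑ i, ((t i : ℕ) : ℤ) * c i : ℤ) : ℝ) / (m * q)) =
        e2pi (((a * MvPolynomial.eval (fun i => ((t i : ℕ) : ℤ)) Q +
          ∑ i, ((t i : ℕ) : ℤ) * (c i / m) : ℤ) : ℝ) / q) := by
      intro t
      have hdot : ∑ i, ((t i : ℕ) : ℤ) * c i = m * ∑ i, ((t i : ℕ) : ℤ) * (c i / m) := by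
        simp only [Finset.mul_sum, mul_left_comm (m : ℤ), Int.mul_ediv_cancel' (hdvd _)]
      have hm' : (m : ℝ) ≠ 0 := by exact_mod_cast hm.ne'
      rw [← e2pi_add, hdot]
      congr 1
      push_cast
      field_simp
    have hmC : (m : ℂ) ≠ 0 := by exact_mod_cast hm.ne'
    simp_rw [hphase, weylF, Nat.cast_mul, mul_pow]
    field_simp
  · simp

def weylTerm (n : ℕ) (Q : MvPolynomial (Fin n) ℤ) (lam : ℤ) (Φ : (Fin n → ℝ) → ℂ)
    (ξ : Fin n → ℝ) (q a : ℕ) : ℂ :=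
  ∑ av : Fin n → Fin q,
    weylF n Q q (a : ℤ) (fun i => ((av i : ℕ) : ℤ)) *
      e2pi (-((lam : ℝ) * (a : ℝ) / (q : ℝ))) *
      Φ (ξ - fun i => ((av i : ℕ) : ℝ) / (q : ℝ))

lemma weylTerm_mul_mul (n : ℕ) (Q : MvPolynomial (Fin n) ℤ) (lam : ℤ) (Φ : (Fin n → ℝ) → ℂ)
    (ξ : Fin n → ℝ) {m q : ℕ} (hm : 0 < m) (hq : 0 < q) (a : ℕ) :
    weylTerm n Q lam Φ ξ (m * q) (m * a) = weylTerm n Q lam Φ ξ q a := by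
  have hF : ∀ av : Fin n → Fin (m * q),
      weylF n Q (m * q) ((m * a : ℕ) : ℤ) (fun i => ((av i : ℕ) : ℤ)) =
        if ∀ i, m ∣ (av i : ℕ) then weylF n Q q a (fun i => ((av i / m : ℕ) : ℤ)) else 0 := by
    intro av
    rw [Nat.cast_mul, weylF_mul_mul n Q hm hq]
    simp only [Int.natCast_dvd_natCast, Int.natCast_ediv]
  simp_rw [weylTerm, hF, ite_mul, zero_mul]
  rw [sum_pi_fin_mul_ite_dvd n m q hm fun v => weylF n Q q a (fun i => ((v i / m : ℕ) : ℤ)) *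
    e2pi (-((lam : ℝ) * ((m * a : ℕ) : ℝ) / ((m * q : ℕ) : ℝ))) *
    Φ (ξ - fun i => ((v i : ℕ) : ℝ) / ((m * q : ℕ) : ℝ))]
  have hm' : (m : ℝ) ≠ 0 := by exact_mod_cast hm.ne'
  refine Finset.sum_congr rfl fun t _ => ?_
  simp only [Nat.mul_div_cancel_left _ hm, Nat.cast_mul]
  congr 4 <;> field_simp

lemma sum_range_eq_sum_divisors_sum_coprime {M : Type*} [AddCommMonoid M] (f : ℕ → ℕ → M)
    (hf : ∀ {m q : ℕ}, 0 < m → 0 < q → ∀ a, f (m * q) (m * a) = f q a) {d : ℕ} (hd : d ≠ 0) :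
    ∑ a ∈ range d, f d a =
      ∑ q ∈ d.divisors, ∑ a ∈ (range q).filter (fun a => a.gcd q = 1), f q a := by
  rw [← Finset.sum_fiberwise_of_maps_to (g := fun a => a.gcd d) (t := d.divisors)
    fun a _ => Nat.mem_divisors.2 ⟨Nat.gcd_dvd_right a d, hd⟩, ← Nat.sum_div_divisors]
  refine Finset.sum_congr rfl fun q hq => ?_
  obtain ⟨m, rfl⟩ := Nat.dvd_of_mem_divisors hq
  have hq0 : 0 < q := Nat.pos_of_mem_divisors hq
  have hm0 : 0 < m := Nat.pos_of_ne_zero (right_ne_zero_of_mul hd)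
  rw [Nat.mul_div_cancel_left m hq0, mul_comm q m]
  symm
  refine Finset.sum_nbij' (m * ·) (· / m) ?_ ?_ ?_ ?_ ?_
  · intro a ha
    simp only [Finset.mem_filter, Finset.mem_range] at ha ⊢
    exact ⟨Nat.mul_lt_mul_of_pos_left ha.1 hm0, by rw [Nat.gcd_mul_left, ha.2, mul_one]⟩
  · intro a ha
    simp only [Finset.mem_filter, Finset.mem_range] at ha ⊢
    refine ⟨Nat.div_lt_of_lt_mul ha.1, ?_⟩
    have := Nat.coprime_div_gcd_div_gcd (m := a) (n := m * q) (by rw [ha.2]; exact hm0)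
    rwa [ha.2, Nat.mul_div_cancel_left _ hm0] at this
  · intro a _
    exact Nat.mul_div_cancel_left a hm0
  · intro a ha
    simp only [Finset.mem_filter, Finset.mem_range] at ha
    exact Nat.mul_div_cancel' (ha.2 ▸ Nat.gcd_dvd_left a (m * q))
  · intro a _
    exact (hf hm0 hq0 a).symm

lemma sum_sum_divisorsAntidiagonal_eq_sum_Icc_sum_Icc {M : Type*} [AddCommMonoid M]
    (I : Finset ℕ) {B : ℕ} (hI : ∀ N ∈ I, 0 < N ∧ N ≤ B) (F : ℕ → ℕ → M) :
    ∑ N ∈ I, ∑ x ∈ N.divisorsAntidiagonal, F x.1 x.2 =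
      ∑ d ∈ Icc 1 B, ∑ h ∈ Icc 1 B, if d * h ∈ I then F h d else 0 := by
  rw [Finset.sum_comm, ← Finset.sum_product', ← Finset.sum_filter,
    ← Finset.sum_fiberwise_of_maps_to (s := (Icc 1 B ×ˢ Icc 1 B).filter fun x => x.2 * x.1 ∈ I)
      (g := fun x => x.2 * x.1) fun x hx => (Finset.mem_filter.1 hx).2]
  refine Finset.sum_congr rfl fun N hN => Finset.sum_congr ?_ fun _ _ => rfl
  ext ⟨h, d⟩
  obtain ⟨hN0, hNB⟩ := hI N hN
  simp only [Finset.mem_filter, Finset.mem_product, Finset.mem_Icc, Nat.mem_divisorsAntidiagonal]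
  rw [mul_comm d h]
  constructor
  · rintro ⟨rfl, -⟩
    have hh := Nat.le_of_dvd hN0 (dvd_mul_right h d)
    have hd := Nat.le_of_dvd hN0 (dvd_mul_left d h)
    exact ⟨⟨⟨⟨Nat.pos_of_mul_pos_right hN0, hh.trans hNB⟩,
      Nat.pos_of_mul_pos_left hN0, hd.trans hNB⟩, hN⟩, rfl⟩
  · rintro ⟨-, rfl⟩
    exact ⟨rfl, hN0.ne'⟩

lemma sum_Ico_eq_sum_Icc_Cjd_mul {R : Type*} [CommRing R] (j : ℕ) (S T : ℕ → R)
    (hST : ∀ d > 0, ∑ q ∈ d.divisors, S q = T d) :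
    ∑ q ∈ Ico (2 ^ (j - 1)) (2 ^ j), S q = ∑ d ∈ Icc 1 (2 ^ j), (Cjd j d : R) * T d := by
  rw [ArithmeticFunction.sum_eq_iff_sum_smul_moebius_eq] at hST
  have hI : ∀ N ∈ Ico (2 ^ (j - 1)) (2 ^ j), 0 < N ∧ N ≤ 2 ^ j := fun N hN =>
    ⟨(Nat.two_pow_pos _).trans_le (Finset.mem_Ico.1 hN).1, (Finset.mem_Ico.1 hN).2.le⟩
  calc ∑ q ∈ Ico (2 ^ (j - 1)) (2 ^ j), S q
      = ∑ N ∈ Ico (2 ^ (j - 1)) (2 ^ j), ∑ x ∈ N.divisorsAntidiagonal,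
          ArithmeticFunction.moebius x.1 • T x.2 :=
        Finset.sum_congr rfl fun N hN => (hST N (hI N hN).1).symm
    _ = ∑ d ∈ Icc 1 (2 ^ j), (Cjd j d : R) * T d := by
        rw [sum_sum_divisorsAntidiagonal_eq_sum_Icc_sum_Icc _ hI
          fun h d => ArithmeticFunction.moebius h • T d]
        simp only [Cjd, Int.cast_sum, Int.cast_ite, Int.cast_zero, Finset.sum_mul, ite_mul,
          zero_mul, zsmul_eq_mul, Finset.mem_Ico]

theorem stmt8_general (n : ℕ) (Q : MvPolynomial (Fin n) ℤ)
    (lam : ℤ) (j : ℕ)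
    (Φ : (Fin n → ℝ) → ℂ) (ξ : Fin n → ℝ) :
    ∑ q ∈ Finset.Ico (2 ^ (j - 1)) (2 ^ j),
      ∑ a ∈ (Finset.range q).filter (fun a => Nat.gcd a q = 1),
        ∑ av : Fin n → Fin q,
          weylF n Q q (a : ℤ) (fun i => ((av i : ℕ) : ℤ)) *
            e2pi (-((lam : ℝ) * (a : ℝ) / (q : ℝ))) *
            Φ (ξ - fun i => ((av i : ℕ) : ℝ) / (q : ℝ)) =
    ∑ d ∈ Finset.Icc 1 (2 ^ j), (Cjd j d : ℂ) *
      ∑ a ∈ Finset.range d, ∑ av : Fin n → Fin d,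
        weylF n Q d (a : ℤ) (fun i => ((av i : ℕ) : ℤ)) *
          e2pi (-((lam : ℝ) * (a : ℝ) / (d : ℝ))) *
          Φ (ξ - fun i => ((av i : ℕ) : ℝ) / (d : ℝ)) :=
  sum_Ico_eq_sum_Icc_Cjd_mul j _ _ fun _ hd =>
    (sum_range_eq_sum_divisors_sum_coprime (weylTerm n Q lam Φ ξ)
      (weylTerm_mul_mul n Q lam Φ ξ) hd.ne').symm

theorem stmt8 (n : ℕ) (hn : 1 ≤ n) (Q : MvPolynomial (Fin n) ℤ)
    (lam : ℤ) (j : ℕ) (hj : 1 ≤ j)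
    (Φ : (Fin n → ℝ) → ℂ) (ξ : Fin n → ℝ) :
    ∑ q ∈ Finset.Ico (2 ^ (j - 1)) (2 ^ j),
      ∑ a ∈ (Finset.range q).filter (fun a => Nat.gcd a q = 1),
        ∑ av : Fin n → Fin q,
          weylF n Q q (a : ℤ) (fun i => ((av i : ℕ) : ℤ)) *
            e2pi (-((lam : ℝ) * (a : ℝ) / (q : ℝ))) *
            Φ (ξ - fun i => ((av i : ℕ) : ℝ) / (q : ℝ)) =
    ∑ d ∈ Finset.Icc 1 (2 ^ j), (Cjd j d : ℂ) *
      ∑ a ∈ Finset.range d, ∑ av : Fin n → Fin d,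
        weylF n Q d (a : ℤ) (fun i => ((av i : ℕ) : ℤ)) *
          e2pi (-((lam : ℝ) * (a : ℝ) / (d : ℝ))) *
          Φ (ξ - fun i => ((av i : ℕ) : ℝ) / (d : ℝ)) :=
  stmt8_general n Q lam j Φ ξ
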